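/- arXiv:1007.4864 — 3 statements merged into one kernel-verified Lean document; each statement's English description precedes it below -/
import Mathlib

section
/- For every real ε with 0 < ε < 1/(2n), integer j ≥ 1 and integer n ≥ 3, defining α_k = 1 + ε^{j+k} and γ_k = α_0 · (α_1 − α_{k−1} + α_{n−1})/(α_0 − α_{k−1} + α_{n−1}) for 2 ≤ k ≤ n, one has γ_{k+1} − γ_k < ε^j · α_0 · (α_{k−1} − α_{n−1}) for all 2 ≤ k ≤ n−1. -/
private lemma case1 (a ε u w : ℝ) (ha : 0 < a) (hε0 : 0 < ε) (hε1 : ε < 1)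
    (hu0 : 0 < u) (hu1 : u < 1) (hw0 : 0 < w) (hw : w ≤ ε * u) :
    (1 + a) * ((1 + a * ε) - (1 + a * (ε * u)) + (1 + a * w)) /
        ((1 + a) - (1 + a * (ε * u)) + (1 + a * w)) -
      (1 + a) * ((1 + a * ε) - (1 + a * u) + (1 + a * w)) /
        ((1 + a) - (1 + a * u) + (1 + a * w)) <
    a * (1 + a) * ((1 + a * u) - (1 + a * w)) := by
  have hεu1 : ε * u < 1 := by nlinarith
  have hD1 : 1 < (1 + a) - (1 + a * u) + (1 + a * w) := by nlinarith
  have hD2 : 1 < (1 + a) - (1 + a * (ε * u)) + (1 + a * w) := by nlinarith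
  have hD1' : (0:ℝ) < (1 + a) - (1 + a * u) + (1 + a * w) := by linarith
  have hD2' : (0:ℝ) < (1 + a) - (1 + a * (ε * u)) + (1 + a * w) := by linarith
  have heq : (1 + a) * ((1 + a * ε) - (1 + a * (ε * u)) + (1 + a * w)) /
        ((1 + a) - (1 + a * (ε * u)) + (1 + a * w)) -
      (1 + a) * ((1 + a * ε) - (1 + a * u) + (1 + a * w)) /
        ((1 + a) - (1 + a * u) + (1 + a * w)) =
      ((1 + a) * (a ^ 2 * u * (1 - ε) ^ 2)) /
        (((1 + a) - (1 + a * u) + (1 + a * w)) *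
         ((1 + a) - (1 + a * (ε * u)) + (1 + a * w))) := by
    rw [div_sub_div _ _ hD2'.ne' hD1'.ne', div_eq_div_iff (by positivity) (by positivity)]
    ring
  rw [heq, div_lt_iff₀ (by positivity)]
  have key : u * (1 - ε) ^ 2 < (u - w) *
      (((1 + a) - (1 + a * u) + (1 + a * w)) *
       ((1 + a) - (1 + a * (ε * u)) + (1 + a * w))) := by
    have h1 : u * (1 - ε) ≤ u - w := by nlinarith
    have h2 : u * (1 - ε) ^ 2 < u * (1 - ε) := by nlinarith
    have h3 : (0:ℝ) < u - w := by nlinarith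
    have hD12 : 1 < ((1 + a) - (1 + a * u) + (1 + a * w)) *
        ((1 + a) - (1 + a * (ε * u)) + (1 + a * w)) := by nlinarith
    nlinarith [mul_lt_mul_of_pos_left hD12 h3]
  nlinarith [mul_pos (mul_pos ha ha) (by linarith : (0:ℝ) < 1 + a)]

private lemma case2 (a ε u : ℝ) (ha : 0 < a) (hε0 : 0 < ε) (hε1 : ε < 1)
    (hu0 : 0 < u) (hu1 : u < 1) :
    (1 + a * ε) -
      (1 + a) * ((1 + a * ε) - (1 + a * u) + (1 + a * (ε * u))) /
        ((1 + a) - (1 + a * u) + (1 + a * (ε * u))) <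
    a * (1 + a) * ((1 + a * u) - (1 + a * (ε * u))) := by
  have hD : 1 < (1 + a) - (1 + a * u) + (1 + a * (ε * u)) := by
    nlinarith [mul_pos ha (sub_pos.2 hu1), mul_pos (mul_pos ha hε0) hu0]
  have hD' : (0:ℝ) < (1 + a) - (1 + a * u) + (1 + a * (ε * u)) := by linarith
  have heq : (1 + a * ε) -
      (1 + a) * ((1 + a * ε) - (1 + a * u) + (1 + a * (ε * u))) /
        ((1 + a) - (1 + a * u) + (1 + a * (ε * u))) =
      (a ^ 2 * u * (1 - ε) ^ 2) / ((1 + a) - (1 + a * u) + (1 + a * (ε * u))) := by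
    rw [eq_div_iff hD'.ne', sub_mul, div_mul_cancel₀ _ hD'.ne']
    ring
  rw [heq, div_lt_iff₀ hD']
  have : a * (1 + a) * ((1 + a * u) - (1 + a * (ε * u))) = a ^ 2 * (1 + a) * (u * (1 - ε)) := by
    ring
  rw [this]
  have h1 : a ^ 2 * u * (1 - ε) ^ 2 < a ^ 2 * (1 + a) * (u * (1 - ε)) := by
    nlinarith [mul_pos (mul_pos (mul_pos ha ha) hu0) (by linarith : (0:ℝ) < 1 - ε)]
  nlinarith [mul_pos (mul_pos (mul_pos (mul_pos ha ha) (by linarith : (0:ℝ) < 1 + a)) hu0) (by linarith : (0:ℝ) < 1 - ε)]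

/-- With `α k = 1 + ε^(j+k)` and `γ k = α₀(α₁ − α_{k−1} + α_{n−1})/(α₀ − α_{k−1} + α_{n−1})`
for `2 ≤ k ≤ n−1` and `γ n = α₁`, one has
`γ_{k+1} − γ_k < ε^j · α₀ · (α_{k−1} − α_{n−1})` for all `2 ≤ k ≤ n−1`. -/
theorem stmt1 (n j : ℕ) (hn : 3 ≤ n) (hj : 1 ≤ j)
    (ε : ℝ) (hε0 : 0 < ε) (hε : ε < 1 / (2 * n))
    (α γ : ℕ → ℝ) (hα : ∀ k, α k = 1 + ε ^ (j + k))
    (hγ : ∀ k, 2 ≤ k → k ≤ n - 1 →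
      γ k = α 0 * (α 1 - α (k - 1) + α (n - 1)) / (α 0 - α (k - 1) + α (n - 1)))
    (hγn : γ n = α 1) :
    ∀ k, 2 ≤ k → k ≤ n - 1 → γ (k + 1) - γ k < ε ^ j * α 0 * (α (k - 1) - α (n - 1)) := by
  have hε1 : ε < 1 := by
    have h2n : (6:ℝ) ≤ 2 * n := by
      have : (3:ℝ) ≤ n := by exact_mod_cast hn
      linarith
    have : 1 / (2 * (n:ℝ)) ≤ 1 := by
      rw [div_le_one (by linarith)]
      linarith
    linarith
  have ha : 0 < ε ^ j := pow_pos hε0 j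
  intro k hk2 hkn
  have e0 : α 0 = 1 + ε ^ j := by rw [hα]; norm_num
  have e1 : α 1 = 1 + ε ^ j * ε := by rw [hα, pow_add, pow_one]
  have ek1 : α (k - 1) = 1 + ε ^ j * ε ^ (k - 1) := by rw [hα, pow_add]
  by_cases hcase : k + 1 ≤ n - 1
  · -- generic case
    have ek : α (k + 1 - 1) = 1 + ε ^ j * (ε * ε ^ (k - 1)) := by
      rw [hα, show j + (k + 1 - 1) = j + (k - 1) + 1 by omega, pow_succ, pow_add]
      ring
    have en1 : α (n - 1) = 1 + ε ^ j * ε ^ (n - 1) := by rw [hα, pow_add]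
    rw [hγ (k + 1) (by omega) hcase, hγ k hk2 hkn, e0, e1, ek1, ek, en1]
    apply case1 _ _ _ _ ha hε0 hε1 (pow_pos hε0 _)
      (pow_lt_one₀ hε0.le hε1 (by omega)) (pow_pos hε0 _)
    calc ε ^ (n - 1) ≤ ε ^ k := pow_le_pow_of_le_one hε0.le hε1.le (by omega)
      _ = ε * ε ^ (k - 1) := by
          rw [show k = k - 1 + 1 by omega, pow_succ, Nat.add_sub_cancel]; ring
  · -- boundary case k = n - 1
    have hkn1 : k = n - 1 := by omega
    have ek1' : α (k - 1) = 1 + ε ^ j * ε ^ (n - 2) := by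
      rw [hα, show j + (k - 1) = j + (n - 2) by omega, pow_add]
    have en1' : α (n - 1) = 1 + ε ^ j * (ε * ε ^ (n - 2)) := by
      rw [hα, show j + (n - 1) = j + (n - 2) + 1 by omega, pow_succ, pow_add]
      ring
    rw [show k + 1 = n by omega, hγn, hγ k hk2 hkn, e0, e1, ek1', en1']
    exact case2 _ _ _ ha hε0 hε1 (pow_pos hε0 _) (pow_lt_one₀ hε0.le hε1 (by omega))
end

section
/- For every real ε with 0 < ε < 1/(2n), integer j ≥ 1 and integer n ≥ 3, defining α_k = 1 + ε^{j+k}, one has γ_k < α_1 for all 2 ≤ k ≤ n−1, where γ_k = α_0 · (α_1 − α_{k−1} + α_{n−1})/(α_0 − α_{k−1} + α_{n−1}). -/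
/-! With `u = α_{k-1} - α_{n-1} > 0`, the inequality `α₀ (α₁ - u) < α₁ (α₀ - u)` reduces to
`u (α₁ - α₀) < 0`, which holds because `k ↦ α_k` is strictly decreasing for `0 < ε < 1`. -/

lemma mul_sub_add_div_sub_add_lt {a b x y : ℝ} (hba : b < a) (hyx : y < x)
    (hden : 0 < a - x + y) : a * (b - x + y) / (a - x + y) < b := by
  rw [div_lt_iff₀ hden]
  nlinarith [mul_pos (sub_pos.2 hba) (sub_pos.2 hyx)]

lemma strictAnti_one_add_pow_add {ε : ℝ} (hε0 : 0 < ε) (hε1 : ε < 1) (j : ℕ) :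
    StrictAnti fun k : ℕ => 1 + ε ^ (j + k) :=
  ((pow_right_strictAnti₀ hε0 hε1).comp_strictMono (strictMono_id.const_add j)).const_add 1

theorem stmt2_general (n j : ℕ)
    (ε : ℝ) (hε0 : 0 < ε) (hε : ε < 1 / (2 * n))
    (α : ℕ → ℝ) (hα : ∀ k, α k = 1 + ε ^ (j + k)) :
    ∀ k, 2 ≤ k → k ≤ n - 1 →
      α 0 * (α 1 - α (k - 1) + α (n - 1)) / (α 0 - α (k - 1) + α (n - 1)) < α 1 := by
  intro k hk2 hkn
  have hε1 : ε < 1 := by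
    have hn : (1 : ℝ) ≤ n := by exact_mod_cast (show 1 ≤ n by omega)
    exact hε.trans (by rw [div_lt_one (by positivity)]; linarith)
  have hanti : StrictAnti α := by
    simpa only [← hα] using strictAnti_one_add_pow_add hε0 hε1 j
  have hpos : 0 < α (n - 1) := by rw [hα]; positivity
  have h0 : α (k - 1) < α 0 := hanti (by omega)
  exact mul_sub_add_div_sub_add_lt (hanti zero_lt_one) (hanti (by omega)) (by linarith)

/-- With `α k = 1 + ε^(j+k)`, for all `2 ≤ k ≤ n−1` one has
`γ_k = α₀(α₁ − α_{k−1} + α_{n−1})/(α₀ − α_{k−1} + α_{n−1}) < α₁`: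
the inflow rate into link `e₁` stays below its capacity, so its queue shrinks. -/
theorem stmt2 (n j : ℕ) (hn : 3 ≤ n) (hj : 1 ≤ j)
    (ε : ℝ) (hε0 : 0 < ε) (hε : ε < 1 / (2 * n))
    (α : ℕ → ℝ) (hα : ∀ k, α k = 1 + ε ^ (j + k)) :
    ∀ k, 2 ≤ k → k ≤ n - 1 →
      α 0 * (α 1 - α (k - 1) + α (n - 1)) / (α 0 - α (k - 1) + α (n - 1)) < α 1 :=
  stmt2_general n j ε hε0 hε α hα
end

section
/- In a simple directed graph G, if H is the union of all directed paths from a vertex u to a vertex v, H contains no cut vertex separating u from v, and H is not a chain of parallel paths, then H contains at least two internally disjoint u–v paths. -/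
/-- A directed multigraph. -/
structure MultiDigraph where
  V : Type
  E : Type
  src : E → V
  tgt : E → V

namespace MultiDigraph

variable (G : MultiDigraph)

/-- `IsWalkFrom G u v es`: the edge list `es` is a directed walk from `u` to `v`. -/
def IsWalkFrom : G.V → G.V → List G.E → Prop
  | u, v, [] => u = v
  | u, v, e :: es => G.src e = u ∧ IsWalkFrom (G.tgt e) v es

/-- The vertices visited by a walk starting at `u`. -/
def pathVerts (u : G.V) (es : List G.E) : List G.V := u :: es.map G.tgt

/-- `IsPathFrom G u v es`: `es` is a (simple) directed path from `u` to `v`. -/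
def IsPathFrom (u v : G.V) (es : List G.E) : Prop :=
  G.IsWalkFrom u v es ∧ (G.pathVerts u es).Nodup

/-- The internal vertices of a path (all visited vertices except the endpoints). -/
def internals (es : List G.E) : List G.V := (es.map G.tgt).dropLast

/-- The subgraph spanned by a set of edges (on the same vertex set). -/
def edgeSubgraph (S : Set G.E) : MultiDigraph where
  V := G.V
  E := {e // e ∈ S}
  src e := G.src e.val
  tgt e := G.tgt e.val

/-- The transpose (reverse) of a directed multigraph. -/
def transpose : MultiDigraph := ⟨G.V, G.E, G.tgt, G.src⟩

/-- The set of edges lying on some (simple) directed `u`–`v` path. -/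
def pathEdges (u v : G.V) : Set G.E := {e | ∃ es, G.IsPathFrom u v es ∧ e ∈ es}

/-- The union of all directed `u`–`v` paths, as a multidigraph whose vertices are
`u`, `v` and the endpoints of edges lying on some `u`–`v` path. -/
def pathUnion (u v : G.V) : MultiDigraph where
  V := {x // x = u ∨ x = v ∨ ∃ e ∈ G.pathEdges u v, G.src e = x ∨ G.tgt e = x}
  E := {e // e ∈ G.pathEdges u v}
  src e := ⟨G.src e.val, Or.inr (Or.inr ⟨e.val, e.property, Or.inl rfl⟩)⟩
  tgt e := ⟨G.tgt e.val, Or.inr (Or.inr ⟨e.val, e.property, Or.inr rfl⟩)⟩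

/-- `u` is a vertex of `pathUnion G u v`. -/
theorem mem_pathUnion_left (u v : G.V) :
    (u = u ∨ u = v ∨ ∃ e ∈ G.pathEdges u v, G.src e = u ∨ G.tgt e = u) := Or.inl rfl

theorem mem_pathUnion_right (u v : G.V) :
    (v = u ∨ v = v ∨ ∃ e ∈ G.pathEdges u v, G.src e = v ∨ G.tgt e = v) := Or.inr (Or.inl rfl)

/-- A chain of parallel links from `s` to `t`: vertices `v₀ = s, …, v_m = t` in a line,
every edge goes from some `v_i` to `v_{i+1}`, and every consecutive pair is joined by
at least one edge. -/
def IsChainOfParallelLinks (s t : G.V) : Prop :=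
  ∃ (m : ℕ) (v : ℕ → G.V), 0 < m ∧ v 0 = s ∧ v m = t ∧
    (∀ i j, i ≤ m → j ≤ m → v i = v j → i = j) ∧
    (∀ x : G.V, ∃ i, i ≤ m ∧ v i = x) ∧
    (∀ e : G.E, ∃ i, i < m ∧ G.src e = v i ∧ G.tgt e = v (i + 1)) ∧
    (∀ i, i < m → ∃ e : G.E, G.src e = v i ∧ G.tgt e = v (i + 1))

end MultiDigraph

open MultiDigraph

/-- `IsSubdivisionWith G H φ`: `G` is a subdivision of `H`, where `φ` embeds the
branch vertices of `H` into `G` and each `H`-edge corresponds to a nontrivial path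
in `G`; the paths are internally disjoint, edge-disjoint, their internal vertices
avoid branch vertices, and together they exhaust all vertices and edges of `G`. -/
def IsSubdivisionWith (G H : MultiDigraph) (φ : H.V → G.V) : Prop :=
  ∃ P : H.E → List G.E,
    Function.Injective φ ∧
    (∀ e, G.IsPathFrom (φ (H.src e)) (φ (H.tgt e)) (P e) ∧ P e ≠ []) ∧
    (∀ e, ∀ x ∈ G.internals (P e), x ∉ Set.range φ) ∧
    (∀ e f, e ≠ f → ∀ x ∈ G.internals (P e), x ∉ G.internals (P f)) ∧
    (∀ e f, e ≠ f → ∀ a ∈ P e, a ∉ P f) ∧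
    (∀ a : G.E, ∃ e, a ∈ P e) ∧
    (∀ x : G.V, x ∈ Set.range φ ∨ ∃ e, x ∈ G.internals (P e))

/-- `H` is a topological minor of `G`: branch vertices of `H` embed injectively into
`G` and the edges of `H` are realized by internally disjoint, edge-disjoint paths
of `G` avoiding branch vertices internally. -/
def IsTopMinorOf (H G : MultiDigraph) : Prop :=
  ∃ (φ : H.V → G.V) (P : H.E → List G.E),
    Function.Injective φ ∧
    (∀ e, G.IsPathFrom (φ (H.src e)) (φ (H.tgt e)) (P e) ∧ P e ≠ []) ∧
    (∀ e, ∀ x ∈ G.internals (P e), x ∉ Set.range φ) ∧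
    (∀ e f, e ≠ f → ∀ x ∈ G.internals (P e), x ∉ G.internals (P f)) ∧
    (∀ e f, e ≠ f → ∀ a ∈ P e, a ∉ P f)

/-- A chain of parallel paths from `s` to `t`: a subdivision of a chain of
parallel links, with `s` and `t` the images of the endpoints. -/
def IsChainOfParallelPaths (G : MultiDigraph) (s t : G.V) : Prop :=
  ∃ (H : MultiDigraph) (s' t' : H.V) (φ : H.V → G.V),
    H.IsChainOfParallelLinks s' t' ∧ IsSubdivisionWith G H φ ∧ φ s' = s ∧ φ t' = t

/-- `G` uses only chains of parallel paths: for every ordered pair `(u, v)`,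
either there is no (nontrivial) `u`–`v` path, or the union of all `u`–`v` paths
is a chain of parallel paths from `u` to `v`. -/
def UsesOnlyChains (G : MultiDigraph) : Prop :=
  ∀ u v : G.V,
    (¬ ∃ es, G.IsPathFrom u v es ∧ es ≠ []) ∨
    IsChainOfParallelPaths (G.pathUnion u v)
      ⟨u, G.mem_pathUnion_left u v⟩ ⟨v, G.mem_pathUnion_right u v⟩

/-- The vertex `u` viewed in the union of all `u`–`v` paths. -/
def MultiDigraph.puSrc (G : MultiDigraph) (u v : G.V) : (G.pathUnion u v).V :=
  ⟨u, G.mem_pathUnion_left u v⟩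

/-- The vertex `v` viewed in the union of all `u`–`v` paths. -/
def MultiDigraph.puTgt (G : MultiDigraph) (u v : G.V) : (G.pathUnion u v).V :=
  ⟨v, G.mem_pathUnion_right u v⟩

/-!
If an edge joins `u` to `v`, it is one path and any other edge lies on a second one; if it is
the only edge, the union of all `u`–`v` paths is a single link, a chain of parallel paths.

Otherwise fix a `u`–`v` path `P = x₀ … xₙ`, `n ≥ 2`. As no `xᵢ` separates `u` from `v`, every
internal `xᵢ` is bypassed: some walk leaves `P` at an `xₐ` with `a < i` and runs off `P`
until it re-enters it at an `x_b` with `b > i`. Let `reach i` be the largest such `b`. Two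
paths leapfrog along `P`: if one ends at `x_c'` and the other at `x_c` with `c = reach c'`,
the first follows `P` to the start `xₐ` of a bypass over `x_c` reaching `x_(reach c)` and
takes it. By the maximality of `reach c'`, `a ≥ c'`; and the bypass misses the off-path
vertices used so far, since a common vertex would give a bypass over an earlier point reaching
further than allowed. When `x_c = v` the other path finishes along `P`, and the two are
internally disjoint.
-/

namespace MultiDigraph

open Relation

def Adj (D : MultiDigraph) (s t : D.V) : Prop := ∃ e, D.src e = s ∧ D.tgt e = t

variable {D : MultiDigraph}

section

variable {a b c y : D.V} {es fs : List D.E}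

theorem pathVerts_cons (a : D.V) (e : D.E) (es : List D.E) :
    D.pathVerts a (e :: es) = a :: D.pathVerts (D.tgt e) es := rfl

theorem start_mem_pathVerts (a : D.V) (es : List D.E) : a ∈ D.pathVerts a es :=
  List.mem_cons_self

theorem IsWalkFrom.end_mem_pathVerts (h : D.IsWalkFrom a b es) : b ∈ D.pathVerts a es := by
  induction es generalizing a with
  | nil => exact h ▸ start_mem_pathVerts a []
  | cons e es ih => exact List.mem_cons_of_mem _ (ih h.2)

theorem IsWalkFrom.append (h₁ : D.IsWalkFrom a b es) (h₂ : D.IsWalkFrom b c fs) :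
    D.IsWalkFrom a c (es ++ fs) := by
  induction es generalizing a with
  | nil => exact (h₁ : a = b) ▸ h₂
  | cons e es ih => exact ⟨h₁.1, ih h₁.2⟩

theorem pathVerts_append (a : D.V) (es fs : List D.E) :
    D.pathVerts a (es ++ fs) = D.pathVerts a es ++ fs.map D.tgt := by
  simp [pathVerts]

theorem IsWalkFrom.mem_pathVerts_append (h : D.IsWalkFrom a b es) :
    y ∈ D.pathVerts a (es ++ fs) ↔ y ∈ D.pathVerts a es ∨ y ∈ D.pathVerts b fs := by
  rw [pathVerts_append, List.mem_append, show D.pathVerts b fs = b :: fs.map D.tgt from rfl,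
    List.mem_cons]
  have := h.end_mem_pathVerts
  constructor
  · tauto
  · rintro (hy | rfl | hy)
    exacts [Or.inl hy, Or.inl this, Or.inr hy]

theorem IsPathFrom.append (h₁ : D.IsPathFrom a b es) (h₂ : D.IsPathFrom b c fs)
    (hdisj : ∀ y ∈ D.pathVerts a es, y ∈ D.pathVerts b fs → y = b) :
    D.IsPathFrom a c (es ++ fs) := by
  refine ⟨h₁.1.append h₂.1, ?_⟩
  have hb := List.nodup_cons.mp h₂.2
  rw [pathVerts_append, List.nodup_append]
  refine ⟨h₁.2, hb.2, fun y hy₁ y' hy₂ hyy' => ?_⟩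
  subst hyy'
  exact hb.1 (hdisj y hy₁ (List.mem_cons_of_mem _ hy₂) ▸ hy₂)

theorem IsPathFrom.exists_suffix (h : D.IsPathFrom a b es) (hy : y ∈ D.pathVerts a es) :
    ∃ fs, D.IsPathFrom y b fs ∧ D.pathVerts y fs ⊆ D.pathVerts a es := by
  induction es generalizing a with
  | nil =>
    obtain rfl := List.mem_singleton.mp hy
    exact ⟨[], h, List.Subset.refl _⟩
  | cons e es ih =>
    rcases List.mem_cons.mp hy with rfl | hy
    · exact ⟨e :: es, h, List.Subset.refl _⟩
    · obtain ⟨fs, hfs, hsub⟩ := ih ⟨h.1.2, (List.nodup_cons.mp h.2).2⟩ hy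
      exact ⟨fs, hfs, List.Subset.trans hsub (List.subset_cons_self _ _)⟩

theorem exists_path_of_reflTransGen {R : D.V → D.V → Prop} (hR : ∀ s t, R s t → D.Adj s t)
    (h : ReflTransGen R a b) :
    ∃ es, D.IsPathFrom a b es ∧
      ∀ w ∈ D.pathVerts a es, ReflTransGen R a w ∧ ReflTransGen R w b := by
  induction h using ReflTransGen.head_induction_on with
  | refl =>
    refine ⟨[], ⟨rfl, List.nodup_singleton _⟩, fun w hw => ?_⟩
    rw [List.mem_singleton.mp hw]
    exact ⟨ReflTransGen.refl, ReflTransGen.refl⟩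
  | @head a a' haa' _ ih =>
    obtain ⟨es, hes, hverts⟩ := ih
    by_cases ha : a ∈ D.pathVerts a' es
    · obtain ⟨fs, hfs, hsub⟩ := hes.exists_suffix ha
      refine ⟨fs, hfs, fun w hw => ⟨?_, (hverts w (hsub hw)).2⟩⟩
      exact ReflTransGen.head haa' (hverts w (hsub hw)).1
    · obtain ⟨e, hsrc, htgt⟩ := hR a a' haa'
      refine ⟨e :: es, ⟨⟨hsrc, htgt ▸ hes.1⟩, ?_⟩, ?_⟩
      · rw [pathVerts_cons, htgt]
        exact List.nodup_cons.mpr ⟨ha, hes.2⟩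
      · rw [pathVerts_cons, htgt]
        rintro w (_ | ⟨_, hw⟩)
        · exact ⟨.refl, .head haa' (hverts a' (start_mem_pathVerts _ _)).2⟩
        · exact ⟨ReflTransGen.head haa' (hverts w hw).1, (hverts w hw).2⟩

theorem IsWalkFrom.map_tgt_eq (h : D.IsWalkFrom a b es) (hne : es ≠ []) :
    es.map D.tgt = D.internals es ++ [b] := by
  induction es generalizing a with
  | nil => exact absurd rfl hne
  | cons e es ih =>
    rcases eq_or_ne es [] with rfl | hes
    · exact congrArg (· :: []) h.2
    · show D.tgt e :: _ = (D.tgt e :: es.map D.tgt).dropLast ++ [b]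
      rw [List.dropLast_cons_of_ne_nil (by simpa using hes)]
      exact congrArg (D.tgt e :: ·) (ih h.2 hes)

theorem IsPathFrom.mem_internals (h : D.IsPathFrom a b es) (hy : y ∈ D.internals es) :
    y ∈ D.pathVerts a es ∧ y ≠ a ∧ y ≠ b := by
  have hne : es ≠ [] := by rintro rfl; simp [internals] at hy
  have hnd := h.2
  rw [pathVerts, h.1.map_tgt_eq hne] at hnd ⊢
  simp only [List.nodup_cons, List.mem_append, List.nodup_append] at hnd
  refine ⟨by simp [hy], fun hya => hnd.1 (Or.inl (hya ▸ hy)), fun hyb => ?_⟩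
  exact hnd.2.2.2 y hy b (List.mem_singleton_self b) hyb

theorem IsPathFrom.internals_disjoint (h₁ : D.IsPathFrom a b es) (h₂ : D.IsPathFrom a b fs)
    (hcommon : ∀ y ∈ D.pathVerts a es, y ∈ D.pathVerts a fs → y = a ∨ y = b) :
    ∀ y ∈ D.internals es, y ∉ D.internals fs := fun y hy hy' => by
  obtain ⟨hy₁, hya, hyb⟩ := h₁.mem_internals hy
  rcases hcommon y hy₁ (h₂.mem_internals hy').1 with rfl | rfl <;> contradiction

theorem IsWalkFrom.src_getElem (h : D.IsWalkFrom a b es) (k : ℕ) (hk : k < es.length) :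
    D.src es[k] = (D.pathVerts a es)[k]'(by simp [pathVerts]; omega) := by
  induction es generalizing a k with
  | nil => simp at hk
  | cons e es ih =>
    cases k with
    | zero => exact h.1
    | succ k => exact ih h.2 k (by simpa using hk)

theorem IsWalkFrom.getElem_length_pathVerts (h : D.IsWalkFrom a b es) :
    (D.pathVerts a es)[es.length]'(by simp [pathVerts]) = b := by
  induction es generalizing a with
  | nil => exact h
  | cons e es ih => exact ih h.2
/-- A path `vert 0 → vert 1 → ⋯ → vert len`; `vert k` for `k > len` and `edge k` for
`k ≥ len` are junk. -/
structure IndexedPath (D : MultiDigraph) where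
  len : ℕ
  vert : ℕ → D.V
  edge : ℕ → D.E
  injOn_vert : Set.InjOn vert (Set.Iic len)
  src_edge : ∀ k < len, D.src (edge k) = vert k
  tgt_edge : ∀ k < len, D.tgt (edge k) = vert (k + 1)

theorem IsPathFrom.exists_indexedPath (h : D.IsPathFrom a b es) (hne : es ≠ []) :
    ∃ P : D.IndexedPath, P.vert 0 = a ∧ P.vert P.len = b := by
  have hlen : (D.pathVerts a es).length = es.length + 1 := by simp [pathVerts]
  let vert k := (D.pathVerts a es).getD k a
  have hvert : ∀ k (hk : k ≤ es.length), vert k = (D.pathVerts a es)[k] := fun k hk =>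
    List.getD_eq_getElem _ _ (by omega)
  refine ⟨⟨es.length, vert, fun k => es.getD k (es.head hne), ?_, ?_, ?_⟩, ?_, ?_⟩
  · intro i hi j hj hij
    rw [hvert i (Set.mem_Iic.mp hi), hvert j (Set.mem_Iic.mp hj)] at hij
    exact h.2.getElem_inj_iff.mp hij
  · intro k hk
    rw [List.getD_eq_getElem _ _ hk, hvert k hk.le]
    exact h.1.src_getElem k hk
  · intro k hk
    rw [List.getD_eq_getElem _ _ hk, hvert (k + 1) hk]
    simp [pathVerts]
  · simp [vert, pathVerts]
  · exact (hvert _ le_rfl).trans h.1.getElem_length_pathVerts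

end

namespace IndexedPath

variable (P : D.IndexedPath) {a b c c' i j k : ℕ} {w y : D.V} {X Y : List D.E}

theorem vert_inj (hi : i ≤ P.len) (hj : j ≤ P.len) (h : P.vert i = P.vert j) : i = j :=
  P.injOn_vert hi hj h

def seg (i j : ℕ) : List D.E := (List.range' i (j - i)).map P.edge

theorem isWalkFrom_seg_add (d : ℕ) (hd : i + d ≤ P.len) :
    D.IsWalkFrom (P.vert i) (P.vert (i + d)) (P.seg i (i + d)) ∧
      D.pathVerts (P.vert i) (P.seg i (i + d)) = (List.range' i (d + 1)).map P.vert := by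
  induction d generalizing i with
  | zero => simp [seg, pathVerts, IsWalkFrom]
  | succ d ih =>
    obtain ⟨hwalk, hverts⟩ := ih (i := i + 1) (by omega)
    have hseg : P.seg i (i + (d + 1)) = P.edge i :: P.seg (i + 1) (i + 1 + d) := by
      simp [seg, List.range'_succ, show i + (d + 1) - i = d + 1 by omega]
    rw [hseg, show i + (d + 1) = i + 1 + d by omega, pathVerts_cons,
      P.tgt_edge i (by omega), hverts, List.range'_succ (n := d + 1)]
    exact ⟨⟨P.src_edge i (by omega), P.tgt_edge i (by omega) ▸ hwalk⟩, rfl⟩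

theorem isPathFrom_seg (hij : i ≤ j) (hj : j ≤ P.len) :
    D.IsPathFrom (P.vert i) (P.vert j) (P.seg i j) := by
  obtain ⟨d, rfl⟩ := Nat.exists_eq_add_of_le hij
  obtain ⟨hwalk, hverts⟩ := P.isWalkFrom_seg_add d hj
  refine ⟨hwalk, hverts ▸ List.Nodup.map_on ?_ List.nodup_range'⟩
  intro k hk k' hk' hkk'
  rw [List.mem_range'_1] at hk hk'
  exact P.vert_inj (by omega) (by omega) hkk'

theorem mem_pathVerts_seg (hij : i ≤ j) (hj : j ≤ P.len) :
    w ∈ D.pathVerts (P.vert i) (P.seg i j) ↔ ∃ k, i ≤ k ∧ k ≤ j ∧ P.vert k = w := by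
  obtain ⟨d, rfl⟩ := Nat.exists_eq_add_of_le hij
  rw [(P.isWalkFrom_seg_add d hj).2, List.mem_map]
  simp only [List.mem_range'_1]
  constructor
  · rintro ⟨k, hk, rfl⟩
    exact ⟨k, by omega, by omega, rfl⟩
  · rintro ⟨k, hk, hk', rfl⟩
    exact ⟨k, by omega, rfl⟩

def support : Set D.V := P.vert '' Set.Iic P.len

theorem vert_mem_support (hk : i ≤ P.len) : P.vert i ∈ P.support := ⟨i, hk, rfl⟩

def OffStep (s t : D.V) : Prop := D.Adj s t ∧ t ∉ P.support

def LeadsTo (w : D.V) (b : ℕ) : Prop := ∃ y, ReflTransGen P.OffStep w y ∧ D.Adj y (P.vert b)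

def HasBypass (i b : ℕ) : Prop := ∃ a < i, P.LeadsTo (P.vert a) b

noncomputable def reach (i : ℕ) : ℕ :=
  open Classical in Nat.findGreatest (P.HasBypass i) P.len

def Bounded (c : ℕ) (w : D.V) : Prop := ∀ b ≤ P.len, P.LeadsTo w b → b ≤ c

def Bypassable : Prop :=
  ∀ i, 0 < i → i < P.len → ∃ b, i < b ∧ b ≤ P.len ∧ P.HasBypass i b

variable {P}

theorem eq_of_reflTransGen_offStep {s t : D.V} (h : ReflTransGen P.OffStep s t)
    (ht : t ∈ P.support) : t = s := by
  cases h.cases_tail with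
  | inl h => exact h
  | inr h => exact absurd ht (h.choose_spec.2.2)

theorem LeadsTo.head {s : D.V} (hs : ReflTransGen P.OffStep s w) (h : P.LeadsTo w b) :
    P.LeadsTo s b :=
  let ⟨y, hwy, hy⟩ := h
  ⟨y, hs.trans hwy, hy⟩

theorem reach_le : P.reach i ≤ P.len := by
  classical
  unfold reach
  exact Nat.findGreatest_le _

theorem le_reach (hb : b ≤ P.len) (h : P.HasBypass i b) : b ≤ P.reach i := by
  classical
  unfold reach
  exact Nat.le_findGreatest hb h

theorem hasBypass_reach (hP : P.Bypassable) (hi : 0 < i) (hi' : i < P.len) :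
    P.HasBypass i (P.reach i) ∧ i < P.reach i := by
  obtain ⟨b, hib, hb, hbyp⟩ := hP i hi hi'
  refine ⟨?_, hib.trans_le (le_reach hb hbyp)⟩
  classical
  unfold reach
  exact Nat.findGreatest_spec hb hbyp

theorem Bounded.mono {c' : ℕ} (h : P.Bounded c w) (hc : c ≤ c') : P.Bounded c' w :=
  fun b hb hw => (h b hb hw).trans hc

theorem bounded_reach (ha : a < c) (hw : ReflTransGen P.OffStep (P.vert a) w) :
    P.Bounded (P.reach c) w :=
  fun _ hb hlead => le_reach hb ⟨a, ha, hlead.head hw⟩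

/-- Follow the walk until it first meets the path beyond `vert i`. -/
theorem exists_hasBypass_of_walk (hi : i < P.len) {q : List D.E}
    (hq : D.IsWalkFrom y (P.vert P.len) q) (havoid : P.vert i ∉ D.pathVerts y q)
    (hy : ∃ a < i, ReflTransGen P.OffStep (P.vert a) y) :
    ∃ b, i < b ∧ b ≤ P.len ∧ P.HasBypass i b := by
  induction q generalizing y with
  | nil =>
    obtain ⟨a, ha, hay⟩ := hy
    have hya := eq_of_reflTransGen_offStep hay ((hq : y = _) ▸ P.vert_mem_support le_rfl)
    have := P.vert_inj le_rfl (by omega : a ≤ P.len) ((hq : y = _) ▸ hya)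
    omega
  | cons e q ih =>
    obtain ⟨a, ha, hay⟩ := hy
    have hadj : D.Adj y (D.tgt e) := ⟨e, hq.1, rfl⟩
    rw [pathVerts_cons, List.mem_cons, not_or] at havoid
    by_cases hsupp : D.tgt e ∈ P.support
    · obtain ⟨b, hb, hbe⟩ := hsupp
      have hbi : b ≠ i := fun hbi => havoid.2 (hbi ▸ hbe ▸ D.start_mem_pathVerts _ _)
      rcases lt_or_gt_of_ne hbi with hbi | hbi
      · exact ih hq.2 havoid.2 ⟨b, hbi, hbe ▸ ReflTransGen.refl⟩
      · exact ⟨b, hbi, hb, a, ha, y, hay, hbe ▸ hadj⟩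
    · exact ih hq.2 havoid.2 ⟨a, ha, hay.tail ⟨hadj, hsupp⟩⟩

theorem bypassable_of_separation
    (hsep : ∀ w, w ≠ P.vert 0 → w ≠ P.vert P.len →
      ∃ q, D.IsPathFrom (P.vert 0) (P.vert P.len) q ∧ w ∉ D.pathVerts (P.vert 0) q) :
    P.Bypassable := by
  intro i hi hi'
  have hne : ∀ j ≤ P.len, j ≠ i → P.vert i ≠ P.vert j := fun j hj hji h =>
    hji (P.vert_inj hi'.le hj h).symm
  obtain ⟨q, hq, havoid⟩ := hsep (P.vert i) (hne 0 (by omega) (by omega))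
    (hne P.len le_rfl (by omega))
  exact exists_hasBypass_of_walk hi' hq.1 havoid ⟨0, hi, ReflTransGen.refl⟩

theorem exists_bypass_path (hP : P.Bypassable) (hc : 0 < c) (hc' : c < P.len) :
    ∃ a < c, P.LeadsTo (P.vert a) (P.reach c) ∧
      ∃ β, D.IsPathFrom (P.vert a) (P.vert (P.reach c)) β ∧
        ∀ w ∈ D.pathVerts (P.vert a) β, w = P.vert a ∨ w = P.vert (P.reach c) ∨
          (w ∉ P.support ∧ P.Bounded (P.reach c) w ∧ ¬ P.Bounded c w) := by
  obtain ⟨⟨a, ha, y, hay, e, hey, heb⟩, hreach⟩ := hasBypass_reach hP hc hc'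
  obtain ⟨γ, hγ, hγverts⟩ := D.exists_path_of_reflTransGen (fun _ _ h => h.1) hay
  have hb_ne : P.vert (P.reach c) ≠ P.vert a := fun h =>
    absurd (P.vert_inj reach_le (by omega) h) (by omega)
  have hb_off : ∀ w, ReflTransGen P.OffStep (P.vert a) w → w ≠ P.vert (P.reach c) := by
    rintro w hw rfl
    exact hb_ne (eq_of_reflTransGen_offStep hw (P.vert_mem_support reach_le))
  have hedge : D.IsPathFrom y (P.vert (P.reach c)) [e] :=
    ⟨⟨hey, heb⟩, by simpa [pathVerts, heb] using hb_off y hay⟩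
  have hγclass : ∀ w ∈ D.pathVerts (P.vert a) γ, w = P.vert a ∨
      (w ∉ P.support ∧ P.Bounded (P.reach c) w ∧ ¬ P.Bounded c w) := by
    intro w hw
    obtain ⟨haw, hwy⟩ := hγverts w hw
    by_cases hsupp : w ∈ P.support
    · exact Or.inl (eq_of_reflTransGen_offStep haw hsupp)
    · refine Or.inr ⟨hsupp, bounded_reach ha haw, fun hbd => ?_⟩
      exact absurd (hbd _ reach_le ⟨y, hwy, e, hey, heb⟩) (by omega)
  refine ⟨a, ha, ⟨y, hay, e, hey, heb⟩, γ ++ [e], hγ.append hedge fun w hw hwe => ?_,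
    fun w hw => ?_⟩
  · rcases List.mem_pair.mp hwe with h | h
    · exact h
    · exact absurd (h.trans heb) (hb_off w (hγverts w hw).1)
  · rcases hγ.1.mem_pathVerts_append.mp hw with hw | hw
    · exact (hγclass w hw).imp_right Or.inr
    · rcases List.mem_pair.mp hw with rfl | h
      · exact (hγclass w hγ.1.end_mem_pathVerts).imp_right Or.inr
      · exact Or.inr (Or.inl (h.trans heb))

/-- The invariant of the construction: `Bounded c` on the off-path vertices used so far keeps
the next bypass, which leads beyond `vert c`, away from them. -/
structure Leapfrog (P : D.IndexedPath) (c' c : ℕ) (X Y : List D.E) : Prop where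
  pos : 0 < c'
  lt : c' < c
  le : c ≤ P.len
  reach_eq : P.reach c' = c
  pathX : D.IsPathFrom (P.vert 0) (P.vert c) X
  pathY : D.IsPathFrom (P.vert 0) (P.vert c') Y
  vertsX : ∀ w ∈ D.pathVerts (P.vert 0) X,
    (∃ k, (k < c' ∨ k = c) ∧ P.vert k = w) ∨ (w ∉ P.support ∧ P.Bounded c w)
  vertsY : ∀ w ∈ D.pathVerts (P.vert 0) Y,
    (∃ k ≤ c', P.vert k = w) ∨ (w ∉ P.support ∧ P.Bounded c w)
  inter : ∀ w ∈ D.pathVerts (P.vert 0) X, w ∈ D.pathVerts (P.vert 0) Y → w = P.vert 0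

namespace Leapfrog

theorem isPathFrom_append_seg (h : P.Leapfrog c' c X Y) (hca : c' ≤ a) (ha : a ≤ P.len) :
    D.IsPathFrom (P.vert 0) (P.vert a) (Y ++ P.seg c' a) := by
  refine h.pathY.append (P.isPathFrom_seg hca ha) fun w hwY hwseg => ?_
  obtain ⟨k, hk, hka, rfl⟩ := (P.mem_pathVerts_seg hca ha).mp hwseg
  rcases h.vertsY _ hwY with ⟨k', hk', hkk'⟩ | ⟨hoff, -⟩
  · have := P.vert_inj (by omega) (by omega) hkk'
    rw [← hkk', show k' = c' by omega]
  · exact absurd (P.vert_mem_support (by omega)) hoff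

theorem mem_append_seg (h : P.Leapfrog c' c X Y) (hca : c' ≤ a) (ha : a ≤ P.len)
    (hw : w ∈ D.pathVerts (P.vert 0) (Y ++ P.seg c' a)) :
    (∃ k ≤ a, P.vert k = w) ∨ (w ∉ P.support ∧ P.Bounded c w) := by
  rcases h.pathY.1.mem_pathVerts_append.mp hw with hw | hw
  · exact (h.vertsY w hw).imp_left fun ⟨k, hk, hkw⟩ => ⟨k, by omega, hkw⟩
  · obtain ⟨k, -, hk, hkw⟩ := (P.mem_pathVerts_seg hca ha).mp hw
    exact Or.inl ⟨k, hk, hkw⟩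

theorem inter_append_seg (h : P.Leapfrog c' c X Y) (hca : c' ≤ a) (ha : a ≤ c)
    (hwX : w ∈ D.pathVerts (P.vert 0) X) (hw : w ∈ D.pathVerts (P.vert 0) (Y ++ P.seg c' a)) :
    w = P.vert 0 ∨ (a = c ∧ w = P.vert c) := by
  have := h.lt; have := h.le
  rcases h.pathY.1.mem_pathVerts_append.mp hw with hw | hw
  · exact Or.inl (h.inter w hwX hw)
  obtain ⟨k, hk, hka, rfl⟩ := (P.mem_pathVerts_seg hca (ha.trans h.le)).mp hw
  rcases h.vertsX _ hwX with ⟨k', hk', hkk'⟩ | ⟨hoff, -⟩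
  · have := P.vert_inj (by omega) (by omega) hkk'
    exact Or.inr ⟨by omega, by rw [show k = c by omega]⟩
  · exact absurd (P.vert_mem_support (by omega)) hoff

theorem exists_next_bypass (h : P.Leapfrog c' c X Y) (hP : P.Bypassable) (hc : c < P.len) :
    ∃ a, c' ≤ a ∧ a < c ∧ ∃ β, D.IsPathFrom (P.vert a) (P.vert (P.reach c)) β ∧
      ∀ w ∈ D.pathVerts (P.vert a) β, w = P.vert a ∨ w = P.vert (P.reach c) ∨
        (w ∉ P.support ∧ P.Bounded (P.reach c) w ∧ ¬ P.Bounded c w) := by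
  have := h.pos; have := h.lt
  obtain ⟨a, ha, hlead, hβ⟩ := exists_bypass_path hP (by omega) hc
  refine ⟨a, ?_, ha, hβ⟩
  -- otherwise the bypass would jump over `vert c'` and get beyond `reach c' = c`
  by_contra hac
  have := h.reach_eq ▸ le_reach reach_le ⟨a, by omega, hlead⟩
  have := (hasBypass_reach hP (by omega) hc).2
  omega

theorem step (h : P.Leapfrog c' c X Y) (hP : P.Bypassable) (hc : c < P.len) :
    ∃ X', P.Leapfrog c (P.reach c) X' X := by
  have := h.pos; have := h.lt
  obtain ⟨a, hca, ha, β, hβ, hβverts⟩ := h.exists_next_bypass hP hc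
  have hcb : c < P.reach c := (hasBypass_reach hP (by omega) hc).2
  have hb := reach_le (P := P) (i := c)
  have hYseg := h.isPathFrom_append_seg hca (by omega)
  have hX' := hYseg.append hβ fun w hw hwβ => by
    rcases hβverts w hwβ with hwa | rfl | ⟨hoff, -, hunb⟩
    · exact hwa
    · rcases h.mem_append_seg hca (by omega) hw with ⟨k, hk, hkw⟩ | ⟨hoff, -⟩
      · exact absurd (P.vert_inj (by omega) hb hkw) (by omega)
      · exact absurd (P.vert_mem_support hb) hoff
    · rcases h.mem_append_seg hca (by omega) hw with ⟨k, hk, rfl⟩ | ⟨-, hbd⟩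
      · exact absurd (P.vert_mem_support (by omega)) hoff
      · exact absurd hbd hunb
  refine ⟨_, ⟨by omega, hcb, hb, rfl, hX', h.pathX, fun w hw => ?_, fun w hw => ?_,
    fun w hw hwX => ?_⟩⟩
  · rcases hYseg.1.mem_pathVerts_append.mp hw with hw | hw
    · rcases h.mem_append_seg hca (by omega) hw with ⟨k, hk, hkw⟩ | ⟨hoff, hbd⟩
      · exact Or.inl ⟨k, Or.inl (by omega), hkw⟩
      · exact Or.inr ⟨hoff, hbd.mono hcb.le⟩
    · rcases hβverts w hw with rfl | rfl | ⟨hoff, hbd, -⟩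
      · exact Or.inl ⟨a, Or.inl ha, rfl⟩
      · exact Or.inl ⟨_, Or.inr rfl, rfl⟩
      · exact Or.inr ⟨hoff, hbd⟩
  · rcases h.vertsX w hw with ⟨k, hk, hkw⟩ | ⟨hoff, hbd⟩
    · exact Or.inl ⟨k, by omega, hkw⟩
    · exact Or.inr ⟨hoff, hbd.mono hcb.le⟩
  · rcases hYseg.1.mem_pathVerts_append.mp hw with hw | hw
    · exact (h.inter_append_seg hca ha.le hwX hw).resolve_right fun h => by omega
    rcases h.vertsX w hwX with ⟨k, hk, rfl⟩ | ⟨hoff, hbd⟩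
    · rcases hβverts _ hw with hka | hkb | ⟨hoff, -⟩
      · exact absurd (P.vert_inj (by omega) (by omega) hka) (by omega)
      · exact absurd (P.vert_inj (by omega) hb hkb) (by omega)
      · exact absurd (P.vert_mem_support (by omega)) hoff
    · rcases hβverts w hw with rfl | rfl | ⟨-, -, hunb⟩
      · exact absurd (P.vert_mem_support (by omega)) hoff
      · exact absurd (P.vert_mem_support hb) hoff
      · exact absurd hbd hunb

theorem finish (h : P.Leapfrog c' P.len X Y) :
    ∃ Y', D.IsPathFrom (P.vert 0) (P.vert P.len) Y' ∧
      P.vert c' ∈ D.pathVerts (P.vert 0) Y' ∧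
      ∀ w ∈ D.pathVerts (P.vert 0) X, w ∈ D.pathVerts (P.vert 0) Y' →
        w = P.vert 0 ∨ w = P.vert P.len := by
  refine ⟨_, h.isPathFrom_append_seg h.lt.le le_rfl,
    h.pathY.1.mem_pathVerts_append.mpr (Or.inl h.pathY.1.end_mem_pathVerts), fun w hwX hw => ?_⟩
  exact (h.inter_append_seg h.lt.le le_rfl hwX hw).imp_right And.right

theorem exists_two_paths {c' c : ℕ} {X Y : List D.E} (h : P.Leapfrog c' c X Y)
    (hP : P.Bypassable) :
    ∃ es₁ es₂, D.IsPathFrom (P.vert 0) (P.vert P.len) es₁ ∧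
      D.IsPathFrom (P.vert 0) (P.vert P.len) es₂ ∧ es₁ ≠ es₂ ∧
      ∀ x ∈ D.internals es₁, x ∉ D.internals es₂ := by
  rcases h.le.lt_or_eq with hc | rfl
  · obtain ⟨X', hX'⟩ := h.step hP hc
    exact hX'.exists_two_paths hP
  · obtain ⟨Y', hY', hc'Y', hinter⟩ := h.finish
    refine ⟨X, Y', h.pathX, hY', ?_, h.pathX.internals_disjoint hY' hinter⟩
    rintro rfl
    have := h.pos; have := h.lt
    rcases hinter _ hc'Y' hc'Y' with h0 | hn
    · exact absurd (P.vert_inj (by omega) (by omega) h0) (by omega)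
    · exact absurd (P.vert_inj (by omega) le_rfl hn) (by omega)
termination_by P.len - c
decreasing_by have := hX'.lt; omega

end Leapfrog

theorem leapfrog_init (hP : P.Bypassable) (h1 : 1 < P.len) :
    ∃ X, P.Leapfrog 1 (P.reach 1) X (P.seg 0 1) := by
  obtain ⟨a, ha, -, β, hβ, hβverts⟩ := exists_bypass_path hP one_pos h1
  obtain rfl : a = 0 := by omega
  have h1b : 1 < P.reach 1 := (hasBypass_reach hP one_pos h1).2
  have hb := reach_le (P := P) (i := 1)
  have hseg {w} := P.mem_pathVerts_seg (i := 0) (j := 1) (w := w) zero_le_one h1.le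
  refine ⟨β, ⟨one_pos, h1b, hb, rfl, hβ, P.isPathFrom_seg zero_le_one h1.le,
    fun w hw => ?_, fun w hw => ?_, fun w hw hwY => ?_⟩⟩
  · rcases hβverts w hw with rfl | rfl | ⟨hoff, hbd, -⟩
    · exact Or.inl ⟨0, Or.inl one_pos, rfl⟩
    · exact Or.inl ⟨_, Or.inr rfl, rfl⟩
    · exact Or.inr ⟨hoff, hbd⟩
  · obtain ⟨k, -, hk, hkw⟩ := hseg.mp hw
    exact Or.inl ⟨k, hk, hkw⟩
  · obtain ⟨k, -, hk, rfl⟩ := hseg.mp hwY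
    rcases hβverts _ hw with h0 | hkb | ⟨hoff, -⟩
    · exact h0
    · exact absurd (P.vert_inj (by omega) hb hkb) (by omega)
    · exact absurd (P.vert_mem_support (by omega)) hoff

end IndexedPath

open IndexedPath

theorem exists_two_internally_disjoint_paths {u v : D.V} {p : List D.E} (huv : u ≠ v)
    (hp : D.IsPathFrom u v p) (hdirect : ¬ D.Adj u v)
    (hsep : ∀ w, w ≠ u → w ≠ v → ∃ q, D.IsPathFrom u v q ∧ w ∉ D.pathVerts u q) :
    ∃ es₁ es₂, D.IsPathFrom u v es₁ ∧ D.IsPathFrom u v es₂ ∧ es₁ ≠ es₂ ∧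
      ∀ x ∈ D.internals es₁, x ∉ D.internals es₂ := by
  obtain ⟨P, rfl, rfl⟩ := hp.exists_indexedPath fun h => huv (by subst h; exact hp.1)
  have hlen : 1 < P.len := by
    by_contra! hle
    rcases Nat.le_one_iff_eq_zero_or_eq_one.mp hle with h0 | h1
    · exact huv (by rw [h0])
    · exact hdirect ⟨P.edge 0, P.src_edge 0 (by omega), by rw [P.tgt_edge 0 (by omega), h1]⟩
  obtain ⟨X, hX⟩ := leapfrog_init (bypassable_of_separation hsep) hlen
  exact hX.exists_two_paths (bypassable_of_separation hsep)

theorem isChainOfParallelLinks_of_single_link {s t : D.V} (hst : s ≠ t)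
    (hV : ∀ x, x = s ∨ x = t) (hE : ∀ e, D.src e = s ∧ D.tgt e = t) (e₀ : D.E) :
    D.IsChainOfParallelLinks s t := by
  refine ⟨1, fun i => if i = 0 then s else t, one_pos, rfl, rfl, ?_, ?_, ?_, ?_⟩
  · intro i j hi hj hij
    interval_cases i <;> interval_cases j <;> simp_all [eq_comm]
  · intro x
    rcases hV x with rfl | rfl
    exacts [⟨0, zero_le_one, rfl⟩, ⟨1, le_rfl, rfl⟩]
  · exact fun e => ⟨0, one_pos, by simp [hE e]⟩
  · intro i hi
    obtain rfl : i = 0 := by omega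
    exact ⟨e₀, by simp [hE e₀]⟩

theorem IsChainOfParallelLinks.isChainOfParallelPaths {s t : D.V}
    (h : D.IsChainOfParallelLinks s t) : IsChainOfParallelPaths D s t := by
  obtain ⟨m, w, -, -, -, hinj, -, hE, -⟩ := id h
  refine ⟨D, s, t, id, h, ⟨fun e => [e], Function.injective_id,
    fun e => ⟨⟨⟨rfl, rfl⟩, ?_⟩, List.cons_ne_nil _ _⟩, by simp [internals],
    by simp [internals], ?_,
    fun e => ⟨e, List.mem_singleton_self e⟩, fun x => Or.inl ⟨x, rfl⟩⟩, rfl, rfl⟩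
  · obtain ⟨i, hi, hs, ht⟩ := hE e
    have : i ≠ i + 1 := by omega
    simpa [pathVerts, hs, ht] using fun h => this (hinj _ _ hi.le hi h)
  · intro e f hef a ha hb
    exact hef ((List.mem_singleton.mp ha).symm.trans (List.mem_singleton.mp hb))

variable {G : MultiDigraph} {u v : G.V}

theorem pathUnion_isWalkFrom_iff {a b : (G.pathUnion u v).V} {es : List (G.pathUnion u v).E} :
    (G.pathUnion u v).IsWalkFrom a b es ↔ G.IsWalkFrom a.1 b.1 (es.map Subtype.val) := by
  induction es generalizing a with
  | nil => exact Subtype.ext_iff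
  | cons e es ih => exact and_congr Subtype.ext_iff ih

theorem pathUnion_isPathFrom_iff {a b : (G.pathUnion u v).V} {es : List (G.pathUnion u v).E} :
    (G.pathUnion u v).IsPathFrom a b es ↔ G.IsPathFrom a.1 b.1 (es.map Subtype.val) := by
  have hverts : ((G.pathUnion u v).pathVerts a es).map Subtype.val =
      G.pathVerts a.1 (es.map Subtype.val) := by
    refine congrArg (a.1 :: ·) ?_
    induction es with
    | nil => rfl
    | cons e es ih => exact congrArg (_ :: ·) ih
  rw [IsPathFrom, IsPathFrom, pathUnion_isWalkFrom_iff, ← hverts]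
  exact and_congr_right fun _ => (List.nodup_map_iff Subtype.val_injective).symm

theorem exists_pathUnion_path {es : List G.E} (h : G.IsPathFrom u v es) :
    ∃ es' : List (G.pathUnion u v).E, es'.map Subtype.val = es ∧
      (G.pathUnion u v).IsPathFrom (G.puSrc u v) (G.puTgt u v) es' := by
  set es' := es.attach.map fun e => (⟨e.1, es, h, e.2⟩ : (G.pathUnion u v).E)
  have hval : es'.map Subtype.val = es := by simp [es']
  refine ⟨es', hval, pathUnion_isPathFrom_iff.mpr ?_⟩
  rw [hval]
  exact h

theorem exists_pathUnion_path_mem (f : (G.pathUnion u v).E) :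
    ∃ es, (G.pathUnion u v).IsPathFrom (G.puSrc u v) (G.puTgt u v) es ∧ f ∈ es := by
  obtain ⟨es, hes, hf⟩ := f.2
  obtain ⟨es', rfl, hes'⟩ := exists_pathUnion_path hes
  obtain ⟨f', hf', hff'⟩ := List.mem_map.mp hf
  exact ⟨es', hes', Subtype.ext hff' ▸ hf'⟩

theorem pathUnion_vert_eq_or_eq
    (hE : ∀ e, (G.pathUnion u v).src e = G.puSrc u v ∧ (G.pathUnion u v).tgt e = G.puTgt u v)
    (x : (G.pathUnion u v).V) : x = G.puSrc u v ∨ x = G.puTgt u v := by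
  obtain ⟨x, hx | hx | ⟨e, he, hx⟩⟩ := x
  · exact Or.inl (Subtype.ext hx)
  · exact Or.inr (Subtype.ext hx)
  · obtain ⟨hs, ht⟩ := hE ⟨e, he⟩
    rcases hx with rfl | rfl
    exacts [Or.inl hs, Or.inr ht]

end MultiDigraph

theorem stmt7_general (G : MultiDigraph) (u v : G.V) (huv : u ≠ v)
    (hconn : ∃ es, G.IsPathFrom u v es ∧ es ≠ [])
    (hcut : ¬ ∃ w : (G.pathUnion u v).V, w ≠ G.puSrc u v ∧ w ≠ G.puTgt u v ∧
      ∀ es, (G.pathUnion u v).IsPathFrom (G.puSrc u v) (G.puTgt u v) es →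
        w ∈ (G.pathUnion u v).pathVerts (G.puSrc u v) es)
    (hnotchain : ¬ IsChainOfParallelPaths (G.pathUnion u v) (G.puSrc u v) (G.puTgt u v)) :
    ∃ es₁ es₂ : List (G.pathUnion u v).E,
      (G.pathUnion u v).IsPathFrom (G.puSrc u v) (G.puTgt u v) es₁ ∧
      (G.pathUnion u v).IsPathFrom (G.puSrc u v) (G.puTgt u v) es₂ ∧
      es₁ ≠ es₂ ∧
      ∀ x ∈ (G.pathUnion u v).internals es₁, x ∉ (G.pathUnion u v).internals es₂ := by
  obtain ⟨p, hp, -⟩ := hconn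
  obtain ⟨p', -, hp'⟩ := exists_pathUnion_path hp
  have huv' : G.puSrc u v ≠ G.puTgt u v := fun h => huv (congrArg Subtype.val h)
  by_cases hdirect : (G.pathUnion u v).Adj (G.puSrc u v) (G.puTgt u v)
  · obtain ⟨ed, hsrc, htgt⟩ := hdirect
    by_cases hsingle : ∀ f, f = ed
    · have hE : ∀ f, (G.pathUnion u v).src f = G.puSrc u v ∧
          (G.pathUnion u v).tgt f = G.puTgt u v := fun f => hsingle f ▸ ⟨hsrc, htgt⟩
      exact absurd (isChainOfParallelLinks_of_single_link huv' (pathUnion_vert_eq_or_eq hE) hE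
        ed).isChainOfParallelPaths hnotchain
    obtain ⟨f, hf⟩ := not_forall.mp hsingle
    obtain ⟨es, hes, hfes⟩ := exists_pathUnion_path_mem f
    refine ⟨[ed], es, ⟨⟨hsrc, htgt⟩, by simpa [pathVerts, htgt] using huv'⟩, hes,
      fun h => hf (List.mem_singleton.mp (h ▸ hfes)), by simp [internals]⟩
  · push Not at hcut
    exact exists_two_internally_disjoint_paths huv' hp' hdirect hcut

/-- Menger-type step in Lemma 8 of Macko–Larson–Steskal: in a simple directed
graph `G`, if `H` is the union of all directed `u`–`v` paths, `H` contains no cut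
vertex separating `u` from `v`, and `H` is not a chain of parallel paths, then `H`
contains two internally disjoint `u`–`v` paths. -/
theorem stmt7 (G : MultiDigraph) (u v : G.V) (huv : u ≠ v)
    (hsimple : ∀ e f : G.E, G.src e = G.src f → G.tgt e = G.tgt f → e = f)
    (hconn : ∃ es, G.IsPathFrom u v es ∧ es ≠ [])
    (hcut : ¬ ∃ w : (G.pathUnion u v).V, w ≠ G.puSrc u v ∧ w ≠ G.puTgt u v ∧
      ∀ es, (G.pathUnion u v).IsPathFrom (G.puSrc u v) (G.puTgt u v) es →
        w ∈ (G.pathUnion u v).pathVerts (G.puSrc u v) es)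
    (hnotchain : ¬ IsChainOfParallelPaths (G.pathUnion u v) (G.puSrc u v) (G.puTgt u v)) :
    ∃ es₁ es₂ : List (G.pathUnion u v).E,
      (G.pathUnion u v).IsPathFrom (G.puSrc u v) (G.puTgt u v) es₁ ∧
      (G.pathUnion u v).IsPathFrom (G.puSrc u v) (G.puTgt u v) es₂ ∧
      es₁ ≠ es₂ ∧
      ∀ x ∈ (G.pathUnion u v).internals es₁, x ∉ (G.pathUnion u v).internals es₂ :=
  stmt7_general G u v huv hconn hcut hnotchain
end
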